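/- arXiv:2011.07318 — 2 statements merged into one kernel-verified Lean document; each statement's English description precedes it below -/
import Mathlib

section
/- Let μ₁, μ₂, σ₁², σ₂² ∈ ℝ^D, where all components of σ₁² and σ₂² are bounded below by σ²_min > 0, and let δ = max(‖μ₁ − μ₂‖, ‖σ₁² − σ₂²‖) (Euclidean norms). Then the closed-form KL divergence between the two diagonal Gaussians, D_KL = (1/2)[∑_i ln(σ²_{2,i}/σ²_{1,i}) − D + ∑_i σ²_{1,i}/σ²_{2,i} + ∑_i (μ_{2,i} − μ_{1,i})²/σ²_{2,i}], satisfies D_KL ≤ (1/2)[2·D·δ/σ²_min + δ²/σ²_min]. -/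
/-!
Coordinatewise, `log (b / a) - 1 + a / b ≤ (b - a) / a + (a - b) / b` by `log x ≤ x - 1`, and
each of the two quotients is at most `|a - b| / σmin ≤ δ / σmin`; summing over the `D`
coordinates gives the first term of the bound. The mean term is at most
`‖μ₁ - μ₂‖² / σmin ≤ δ² / σmin` because every weight `1 / σ₂ᵢ` is at most `1 / σmin`.
-/

open Real Finset

lemma div_le_abs_div_of_le {x a m : ℝ} (hm : 0 < m) (ha : m ≤ a) : x / a ≤ |x| / m :=
  (div_le_div_of_nonneg_right (le_abs_self x) (hm.trans_le ha).le).trans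
    (div_le_div_of_nonneg_left (abs_nonneg x) hm ha)

lemma log_div_sub_one_add_div_le {a b m : ℝ} (hm : 0 < m) (ha : m ≤ a) (hb : m ≤ b) :
    log (b / a) - 1 + a / b ≤ 2 * |a - b| / m := by
  have ha₀ : 0 < a := hm.trans_le ha
  have hb₀ : 0 < b := hm.trans_le hb
  calc log (b / a) - 1 + a / b
      ≤ (b / a - 1) - 1 + a / b := by gcongr; exact log_le_sub_one_of_pos (by positivity)
    _ = (b - a) / a + (a - b) / b := by field_simp; ring
    _ ≤ |b - a| / m + |a - b| / m :=
        add_le_add (div_le_abs_div_of_le hm ha) (div_le_abs_div_of_le hm hb)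
    _ = 2 * |a - b| / m := by rw [abs_sub_comm]; ring

section EuclideanSpace

variable {ι : Type*} [Fintype ι]

lemma sum_log_div_sub_card_add_sum_div_le {m : ℝ} (hm : 0 < m) (a b : EuclideanSpace ℝ ι)
    (ha : ∀ i, m ≤ a i) (hb : ∀ i, m ≤ b i) :
    (∑ i, log (b i / a i)) - Fintype.card ι + ∑ i, a i / b i
      ≤ 2 * Fintype.card ι * ‖a - b‖ / m := by
  have hcoord (i : ι) : log (b i / a i) - 1 + a i / b i ≤ 2 * ‖a - b‖ / m :=
    (log_div_sub_one_add_div_le hm (ha i) (hb i)).trans <| by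
      gcongr; exact PiLp.norm_apply_le (a - b) i
  calc (∑ i, log (b i / a i)) - Fintype.card ι + ∑ i, a i / b i
      = ∑ i, (log (b i / a i) - 1 + a i / b i) := by
        simp only [sum_add_distrib, sum_sub_distrib, sum_const, card_univ, nsmul_one]
    _ ≤ ∑ _i : ι, 2 * ‖a - b‖ / m := sum_le_sum fun i _ => hcoord i
    _ = 2 * Fintype.card ι * ‖a - b‖ / m := by
        simp only [sum_const, card_univ, nsmul_eq_mul]; ring

lemma sum_sq_div_le_norm_sq_div {m : ℝ} (hm : 0 < m) (x σ : EuclideanSpace ℝ ι)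
    (hσ : ∀ i, m ≤ σ i) : ∑ i, x i ^ 2 / σ i ≤ ‖x‖ ^ 2 / m := by
  rw [EuclideanSpace.real_norm_sq_eq, sum_div]
  exact sum_le_sum fun i _ => div_le_div_of_nonneg_left (sq_nonneg _) hm (hσ i)

end EuclideanSpace

/-- Bound on the closed-form KL divergence between two `D`-dimensional diagonal
Gaussians: with all variance components at least `σmin > 0` and
`δ = max (‖μ₁ - μ₂‖) (‖σ₁² - σ₂²‖)`, the KL divergence
`(1/2)[∑ ln(σ²₂ᵢ/σ²₁ᵢ) - D + ∑ σ²₁ᵢ/σ²₂ᵢ + ∑ (μ₂ᵢ - μ₁ᵢ)²/σ²₂ᵢ]`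
is at most `(1/2)[2·D·δ/σmin + δ²/σmin]`. -/
theorem kl_divergence_bound {D : ℕ} (μ₁ μ₂ σsq₁ σsq₂ : EuclideanSpace ℝ (Fin D))
    (σmin : ℝ) (hσmin : 0 < σmin)
    (h₁ : ∀ i, σmin ≤ σsq₁ i) (h₂ : ∀ i, σmin ≤ σsq₂ i)
    (δ : ℝ) (hδ : δ = max ‖μ₁ - μ₂‖ ‖σsq₁ - σsq₂‖) :
    (1 / 2 : ℝ) * ((∑ i : Fin D, Real.log (σsq₂ i / σsq₁ i)) - (D : ℝ)
        + (∑ i : Fin D, σsq₁ i / σsq₂ i)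
        + (∑ i : Fin D, (μ₂ i - μ₁ i) ^ 2 / σsq₂ i))
      ≤ (1 / 2 : ℝ) * (2 * (D : ℝ) * δ / σmin + δ ^ 2 / σmin) := by
  have hδμ : ‖μ₂ - μ₁‖ ≤ δ := norm_sub_rev μ₂ μ₁ ▸ hδ ▸ le_max_left _ _
  have hδσ : ‖σsq₁ - σsq₂‖ ≤ δ := hδ ▸ le_max_right _ _
  have hvar := sum_log_div_sub_card_add_sum_div_le hσmin σsq₁ σsq₂ h₁ h₂
  have hmean := sum_sq_div_le_norm_sq_div hσmin (μ₂ - μ₁) σsq₂ h₂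
  rw [Fintype.card_fin] at hvar
  simp only [PiLp.sub_apply] at hmean
  gcongr (1 / 2 : ℝ) * ?_
  calc _ ≤ 2 * (D : ℝ) * ‖σsq₁ - σsq₂‖ / σmin + ‖μ₂ - μ₁‖ ^ 2 / σmin := add_le_add hvar hmean
    _ ≤ 2 * (D : ℝ) * δ / σmin + δ ^ 2 / σmin := by gcongr
end

section
/- Let E be a metric space, K ≥ 0, and let μ : E → ℝ^D and σ² : E → ℝ^D be K-Lipschitz maps (with the Euclidean metric on ℝ^D) such that every component of σ²(e) is bounded below by σ²_min > 0 for all e ∈ E. Let e₁, e₂ ∈ E with d(e₁, e₂) = ε_e. Then the closed-form KL divergence between the diagonal Gaussians N(μ(e₁), diag(σ²(e₁))) and N(μ(e₂), diag(σ²(e₂))), namely (1/2)[∑_i ln(σ²_i(e₂)/σ²_i(e₁)) − D + ∑_i σ²_i(e₁)/σ²_i(e₂) + ∑_i (μ_i(e₂) − μ_i(e₁))²/σ²_i(e₂)], is at most (1/2)[2·D·K·ε_e/σ²_min + (K·ε_e)²/σ²_min]; in particular it is in O((ε_e K)²). -/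
/-!
Coordinatewise, `log (b / a) ≤ b / a - 1 = (b - a) / a`, and `a / b - 1 = (a - b) / b`; both are at
most `L / σmin` once the variances are `≥ σmin` and differ by at most `L = K εₑ`, the Lipschitz bound
on `σ²`. So the log-determinant and trace terms together contribute at most `2 D L / σmin`, while
the Mahalanobis term is at most `‖μ(e₂) - μ(e₁)‖² / σmin ≤ L² / σmin`.
-/

open Finset Real

/-- `D_KL(N(μ₁, diag σ₁) ‖ N(μ₂, diag σ₂))` in closed form; `σ₁`, `σ₂` are the variance vectors. -/
noncomputable def diagGaussianKL {ι : Type*} [Fintype ι] (μ₁ σ₁ μ₂ σ₂ : EuclideanSpace ℝ ι) : ℝ :=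
  1 / 2 * ((∑ i, log (σ₂ i / σ₁ i)) - Fintype.card ι + (∑ i, σ₁ i / σ₂ i)
    + ∑ i, (μ₂ i - μ₁ i) ^ 2 / σ₂ i)

lemma div_sub_one_le_of_abs_sub_le {a b m L : ℝ} (hm : 0 < m) (hb : m ≤ b) (hab : |a - b| ≤ L) :
    a / b - 1 ≤ L / m := by
  rw [div_sub_one (hm.trans_le hb).ne']
  exact div_le_div₀ ((abs_nonneg _).trans hab) ((le_abs_self _).trans hab) hm hb

lemma log_div_add_div_sub_one_le {a b m L : ℝ} (hm : 0 < m) (ha : m ≤ a) (hb : m ≤ b)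
    (hab : |a - b| ≤ L) : log (b / a) + a / b - 1 ≤ 2 * L / m := by
  have hlog : log (b / a) ≤ b / a - 1 :=
    log_le_sub_one_of_pos (div_pos (hm.trans_le hb) (hm.trans_le ha))
  have hba := div_sub_one_le_of_abs_sub_le hm ha (abs_sub_comm a b ▸ hab)
  have hab' := div_sub_one_le_of_abs_sub_le hm hb hab
  linarith [show 2 * L / m = L / m + L / m by ring]

lemma sum_sq_sub_div_le_dist_sq_div {ι : Type*} [Fintype ι] (x y s : EuclideanSpace ℝ ι) {m : ℝ}
    (hm : 0 < m) (hs : ∀ i, m ≤ s i) : ∑ i, (x i - y i) ^ 2 / s i ≤ dist x y ^ 2 / m := by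
  calc ∑ i, (x i - y i) ^ 2 / s i ≤ ∑ i, (x i - y i) ^ 2 / m :=
        sum_le_sum fun i _ => div_le_div_of_nonneg_left (sq_nonneg _) hm (hs i)
    _ = dist x y ^ 2 / m := by
        simp_rw [← sum_div, PiLp.dist_sq_eq_of_L2, Real.dist_eq, sq_abs]

theorem diagGaussianKL_le {ι : Type*} [Fintype ι] {μ₁ σ₁ μ₂ σ₂ : EuclideanSpace ℝ ι} {m L : ℝ}
    (hm : 0 < m) (hσ₁ : ∀ i, m ≤ σ₁ i) (hσ₂ : ∀ i, m ≤ σ₂ i)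
    (hμ : dist μ₂ μ₁ ≤ L) (hσ : dist σ₁ σ₂ ≤ L) :
    diagGaussianKL μ₁ σ₁ μ₂ σ₂ ≤ 1 / 2 * (2 * Fintype.card ι * L / m + L ^ 2 / m) := by
  have hlogTrace : ∑ i, (log (σ₂ i / σ₁ i) + σ₁ i / σ₂ i - 1) ≤ Fintype.card ι * (2 * L / m) :=
    calc _ ≤ ∑ _i : ι, 2 * L / m := sum_le_sum fun i _ =>
            log_div_add_div_sub_one_le hm (hσ₁ i) (hσ₂ i) ((PiLp.dist_apply_le σ₁ σ₂ i).trans hσ)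
      _ = _ := by rw [sum_const, card_univ, nsmul_eq_mul]
  have hMahalanobis : ∑ i, (μ₂ i - μ₁ i) ^ 2 / σ₂ i ≤ L ^ 2 / m :=
    (sum_sq_sub_div_le_dist_sq_div μ₂ μ₁ σ₂ hm hσ₂).trans (by gcongr)
  have hsplit : ∑ i, (log (σ₂ i / σ₁ i) + σ₁ i / σ₂ i - 1)
      = (∑ i, log (σ₂ i / σ₁ i)) - Fintype.card ι + ∑ i, σ₁ i / σ₂ i := by
    simp only [sum_sub_distrib, sum_add_distrib, sum_const, card_univ, nsmul_one]
    ring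
  rw [diagGaussianKL]
  linarith [show 2 * Fintype.card ι * L / m = Fintype.card ι * (2 * L / m) by ring]

theorem sac_kl_bound_general {D : ℕ} {E : Type*} [MetricSpace E]
    (K : ℝ)
    (μ σsq : E → EuclideanSpace ℝ (Fin D))
    (hμLip : ∀ x y : E, dist (μ x) (μ y) ≤ K * dist x y)
    (hσLip : ∀ x y : E, dist (σsq x) (σsq y) ≤ K * dist x y)
    (σmin : ℝ) (hσmin : 0 < σmin)
    (hσsq : ∀ (e : E) (i : Fin D), σmin ≤ σsq e i)
    (e₁ e₂ : E) (εₑ : ℝ) (hε : dist e₁ e₂ = εₑ) :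
    (1 / 2 : ℝ) * ((∑ i : Fin D, Real.log (σsq e₂ i / σsq e₁ i)) - (D : ℝ)
        + (∑ i : Fin D, σsq e₁ i / σsq e₂ i)
        + (∑ i : Fin D, (μ e₂ i - μ e₁ i) ^ 2 / σsq e₂ i))
      ≤ (1 / 2 : ℝ) * (2 * (D : ℝ) * (K * εₑ) / σmin + (K * εₑ) ^ 2 / σmin) := by
  have hμ : dist (μ e₂) (μ e₁) ≤ K * εₑ := (hμLip e₂ e₁).trans_eq (by rw [dist_comm, hε])
  have hσ : dist (σsq e₁) (σsq e₂) ≤ K * εₑ := hε ▸ hσLip e₁ e₂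
  simpa only [diagGaussianKL, Fintype.card_fin] using
    diagGaussianKL_le hσmin (hσsq e₁) (hσsq e₂) hμ hσ

/-- Proposition 1: if the SAC actor mean `μ` and variance `σ²` are `K`-Lipschitz
maps from the embedding space `E` into `ℝ^D`, with all variance components at
least `σmin > 0`, then for embeddings `e₁, e₂` at distance `ε_e` the closed-form
KL divergence between the two diagonal Gaussian action distributions is at most
`(1/2)[2·D·K·ε_e/σmin + (K·ε_e)²/σmin]`, i.e. it is in `O((ε_e K)²)`. -/
theorem sac_kl_bound {D : ℕ} {E : Type*} [MetricSpace E]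
    (K : ℝ) (hK : 0 ≤ K)
    (μ σsq : E → EuclideanSpace ℝ (Fin D))
    (hμLip : ∀ x y : E, dist (μ x) (μ y) ≤ K * dist x y)
    (hσLip : ∀ x y : E, dist (σsq x) (σsq y) ≤ K * dist x y)
    (σmin : ℝ) (hσmin : 0 < σmin)
    (hσsq : ∀ (e : E) (i : Fin D), σmin ≤ σsq e i)
    (e₁ e₂ : E) (εₑ : ℝ) (hε : dist e₁ e₂ = εₑ) :
    (1 / 2 : ℝ) * ((∑ i : Fin D, Real.log (σsq e₂ i / σsq e₁ i)) - (D : ℝ)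
        + (∑ i : Fin D, σsq e₁ i / σsq e₂ i)
        + (∑ i : Fin D, (μ e₂ i - μ e₁ i) ^ 2 / σsq e₂ i))
      ≤ (1 / 2 : ℝ) * (2 * (D : ℝ) * (K * εₑ) / σmin + (K * εₑ) ^ 2 / σmin) :=
  sac_kl_bound_general K μ σsq hμLip hσLip σmin hσmin hσsq e₁ e₂ εₑ hε
end
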